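/- Each eigenvalue Λ_i of the operator χ (in the one-dimensional Gaussian quadrature setup) is a root of every nonzero polynomial p of degree q+1 that is orthogonal to P_q. -/

import Mathlib

/-! Dividing `s` by `X - Λ` gives `s = s(Λ) + (X - Λ) r` with `deg r ≤ q` whenever `deg s ≤ q + 1`.
The eigen-relation `⟨(X - Λ) u | r⟩ = 0` then yields the δ lemma `⟨s | u⟩ = s(Λ) ⟨1 | u⟩`.
For `s = u` it gives `u(Λ) ⟨1 | u⟩ = 1`, so `⟨1 | u⟩ ≠ 0`; for `s = p` it gives
`p(Λ) ⟨1 | u⟩ = ⟨p | u⟩ = 0`. -/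

open MeasureTheory Polynomial

namespace Polynomial

theorem eval_eq_eval_add_mul_eval_divByMonic {R : Type*} [CommRing R] (s : R[X]) (a x : R) :
    s.eval x = s.eval a + (x - a) * (s /ₘ (X - C a)).eval x := by
  conv_lhs => rw [← modByMonic_add_div s (X - C a)]
  simp only [modByMonic_X_sub_C_eq_C_eval, eval_add, eval_C, eval_mul, eval_sub, eval_X]

theorem natDegree_divByMonic_X_sub_C_le {R : Type*} [CommRing R] [Nontrivial R] {s : R[X]}
    {q : ℕ} (hs : s.natDegree ≤ q + 1) (a : R) : (s /ₘ (X - C a)).natDegree ≤ q := by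
  rw [natDegree_divByMonic s (monic_X_sub_C a), natDegree_X_sub_C]
  omega

end Polynomial

section GaussianQuadrature

variable {μ : Measure ℝ} {q : ℕ} {u : ℝ[X]} {Λ : ℝ}

theorem integral_eval_mul_eq_eval_mul_integral
    (hint : ∀ p : ℝ[X], Integrable (fun x => p.eval x) μ)
    (heig : ∀ p : ℝ[X], p.natDegree ≤ q →
      ∫ x, (x * u.eval x - Λ * u.eval x) * p.eval x ∂μ = 0)
    {s : ℝ[X]} (hs : s.natDegree ≤ q + 1) :
    ∫ x, s.eval x * u.eval x ∂μ = s.eval Λ * ∫ x, u.eval x ∂μ := by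
  set r := s /ₘ (X - C Λ)
  have hr : (∫ x, (x * u.eval x - Λ * u.eval x) * r.eval x ∂μ) = 0 :=
    heig r (natDegree_divByMonic_X_sub_C_le hs Λ)
  have hint_r : Integrable (fun x => (x * u.eval x - Λ * u.eval x) * r.eval x) μ :=
    (hint ((X - C Λ) * u * r)).congr <| .of_forall fun x => by
      simp only [eval_mul, eval_sub, eval_X, eval_C]; ring
  calc ∫ x, s.eval x * u.eval x ∂μ
      = ∫ x, (x * u.eval x - Λ * u.eval x) * r.eval x + s.eval Λ * u.eval x ∂μ :=
        integral_congr_ae <| .of_forall fun x => by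
          simp only [eval_eq_eval_add_mul_eval_divByMonic s Λ x, r]; ring
    _ = s.eval Λ * ∫ x, u.eval x ∂μ := by
        rw [integral_add hint_r ((hint u).const_mul _), hr, integral_const_mul, zero_add]

theorem integral_eval_ne_zero_of_eigenvector
    (hint : ∀ p : ℝ[X], Integrable (fun x => p.eval x) μ) (hu : u.natDegree ≤ q)
    (heig : ∀ p : ℝ[X], p.natDegree ≤ q →
      ∫ x, (x * u.eval x - Λ * u.eval x) * p.eval x ∂μ = 0)
    (hnorm : ∫ x, u.eval x * u.eval x ∂μ = 1) :
    ∫ x, u.eval x ∂μ ≠ 0 := by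
  intro h
  have := integral_eval_mul_eq_eval_mul_integral hint heig (hu.trans q.le_succ)
  rw [hnorm, h, mul_zero] at this
  exact one_ne_zero this

end GaussianQuadrature

theorem nodes_are_roots_of_orthogonal_polynomial_general (q : ℕ) (μ : Measure ℝ)
    (hint : ∀ p : Polynomial ℝ, Integrable (fun x => p.eval x) μ)
    (u : Polynomial ℝ) (hu : u.natDegree ≤ q) (Λ : ℝ)
    (heig : ∀ p : Polynomial ℝ, p.natDegree ≤ q →
      ∫ x, (x * u.eval x - Λ * u.eval x) * p.eval x ∂μ = 0)
    (hnorm : ∫ x, u.eval x * u.eval x ∂μ = 1)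
    (p : Polynomial ℝ) (hpdeg : p.natDegree = q + 1)
    (horthp : ∀ r : Polynomial ℝ, r.natDegree ≤ q →
      ∫ x, p.eval x * r.eval x ∂μ = 0) :
    p.eval Λ = 0 := by
  have hpu : p.eval Λ * ∫ x, u.eval x ∂μ = 0 := by
    rw [← integral_eval_mul_eq_eval_mul_integral hint heig hpdeg.le, horthp u hu]
  exact (mul_eq_zero.mp hpu).resolve_right
    (integral_eval_ne_zero_of_eigenvector hint hu heig hnorm)

/-- Theorem 8: each eigenvalue Λ of χ is a root of every nonzero
degree-(q+1) polynomial orthogonal to P_q. -/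
theorem nodes_are_roots_of_orthogonal_polynomial (q : ℕ) (μ : Measure ℝ)
    (hint : ∀ p : Polynomial ℝ, Integrable (fun x => p.eval x) μ)
    (u : Polynomial ℝ) (hu : u.natDegree ≤ q) (Λ : ℝ)
    (heig : ∀ p : Polynomial ℝ, p.natDegree ≤ q →
      ∫ x, (x * u.eval x - Λ * u.eval x) * p.eval x ∂μ = 0)
    (hnorm : ∫ x, u.eval x * u.eval x ∂μ = 1)
    (p : Polynomial ℝ) (hp0 : p ≠ 0) (hpdeg : p.natDegree = q + 1)
    (horthp : ∀ r : Polynomial ℝ, r.natDegree ≤ q →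
      ∫ x, p.eval x * r.eval x ∂μ = 0) :
    p.eval Λ = 0 :=
  nodes_are_roots_of_orthogonal_polynomial_general q μ hint u hu Λ heig hnorm p hpdeg horthp
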